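/- arXiv:1711.07978 — 5 statements merged into one kernel-verified Lean document; each statement's English description precedes it below -/
import Mathlib

section
/- Let λ₁,...,λ_l be distinct real numbers with positive integer multiplicities m₁,...,m_l, and let ψ, c̄ be real numbers. Suppose for each i the identity ∑_{j≠i} m_j (c̄ + 2λ_iλ_j + ψ(λ_i+λ_j))/(λ_i − λ_j) = 0 holds (the Cartan identity for null screen isoparametric hypersurfaces). If c̄ = 0 and ψ = 0 and l ≥ 2, then l = 2 and one of the λ_i equals zero. -/
/-!
With `c̄ = ψ = 0` the `i`-th Cartan identity reads
`2 λᵢ ∑_{j ≠ i} mⱼ λⱼ / (λᵢ - λⱼ) = 0`.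
Choose `i` so that `λᵢ` is a nonzero curvature of least absolute value.
Then every `λⱼ / (λᵢ - λⱼ)` is `≤ 0`, so the vanishing sum forces `λⱼ = 0`
for all `j ≠ i`; by distinctness only one such `j` exists.
-/

open Finset

lemma card_le_two_of_forall_ne_eq {ι β : Type*} [Fintype ι] [DecidableEq ι] {f : ι → β}
    (hf : Function.Injective f) {i : ι} {c : β} (hc : ∀ j ≠ i, f j = c) :
    Fintype.card ι ≤ 2 := by
  have hle : (univ.erase i).card ≤ 1 := card_le_one.mpr fun a ha b hb =>
    hf ((hc a (ne_of_mem_erase ha)).trans (hc b (ne_of_mem_erase hb)).symm)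
  rw [card_erase_of_mem (mem_univ i), card_univ] at hle
  omega

lemma exists_ne_zero_forall_abs_le {ι K : Type*} [Fintype ι] [AddGroup K] [LinearOrder K]
    {lam : ι → K} (hlam : Function.Injective lam) (hcard : 2 ≤ Fintype.card ι) :
    ∃ i, lam i ≠ 0 ∧ ∀ j, lam j ≠ 0 → |lam i| ≤ |lam j| := by
  obtain ⟨a, b, hab⟩ := Fintype.exists_pair_of_one_lt_card hcard
  have hne : (univ.filter fun j => lam j ≠ 0).Nonempty := by
    by_cases ha : lam a = 0
    · exact ⟨b, by simpa [ha] using fun hb => hab (hlam (ha.trans hb.symm))⟩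
    · exact ⟨a, by simpa using ha⟩
  obtain ⟨i, hi, hmin⟩ := exists_min_image _ (fun j => |lam j|) hne
  exact ⟨i, (mem_filter.mp hi).2, fun j hj => hmin j (mem_filter.mpr ⟨mem_univ j, hj⟩)⟩

section

variable {K : Type*} [Field K] [LinearOrder K] [IsStrictOrderedRing K]

lemma div_sub_nonpos_of_abs_le {a b : K} (h : |a| ≤ |b|) : b / (a - b) ≤ 0 := by
  rcases le_or_gt 0 b with hb | hb
  · rw [abs_of_nonneg hb] at h
    exact div_nonpos_of_nonneg_of_nonpos hb (by linarith [le_abs_self a])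
  · rw [abs_of_neg hb] at h
    exact div_nonpos_of_nonpos_of_nonneg hb.le (by linarith [neg_abs_le a])

lemma eq_zero_of_sum_mul_div_sub_eq_zero {ι : Type*} [Fintype ι] [DecidableEq ι]
    {lam w : ι → K} (hlam : Function.Injective lam) (hw : ∀ j, 0 < w j) {i : ι}
    (hmin : ∀ j, lam j ≠ 0 → |lam i| ≤ |lam j|)
    (hsum : ∑ j ∈ univ.erase i, w j * (lam j / (lam i - lam j)) = 0) :
    ∀ j ≠ i, lam j = 0 := by
  have hterm : ∀ j ∈ univ.erase i, w j * (lam j / (lam i - lam j)) ≤ 0 := by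
    intro j _
    rcases eq_or_ne (lam j) 0 with h0 | h0
    · simp [h0]
    · exact mul_nonpos_of_nonneg_of_nonpos (hw j).le (div_sub_nonpos_of_abs_le (hmin j h0))
  intro j hj
  have hzero := (sum_eq_zero_iff_of_nonpos hterm).mp hsum j (mem_erase.mpr ⟨hj, mem_univ j⟩)
  simpa [(hw j).ne', sub_ne_zero.mpr (hlam.ne hj.symm)] using hzero

end

/-- Cartan identities in the flat case (c̄ = 0, ψ = 0) force at most two
distinct screen principal curvatures, one of them zero. -/
theorem stmt0 (l : ℕ) (lam : Fin l → ℝ) (m : Fin l → ℕ)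
    (hdist : Function.Injective lam) (hm : ∀ i, 0 < m i)
    (cbar psi : ℝ)
    (hcartan : ∀ i : Fin l, ∑ j ∈ Finset.univ.erase i,
      (m j : ℝ) * (cbar + 2 * lam i * lam j + psi * (lam i + lam j)) / (lam i - lam j) = 0)
    (hc : cbar = 0) (hpsi : psi = 0) (hl : 2 ≤ l) :
    l = 2 ∧ ∃ i : Fin l, lam i = 0 := by
  subst hc hpsi
  obtain ⟨i, hi, hmin⟩ := exists_ne_zero_forall_abs_le hdist (by simpa using hl)
  have hsum : ∑ j ∈ univ.erase i, (m j : ℝ) * (lam j / (lam i - lam j)) = 0 := by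
    have hfactor :
        2 * lam i * ∑ j ∈ univ.erase i, (m j : ℝ) * (lam j / (lam i - lam j)) = 0 := by
      rw [← hcartan i, mul_sum]
      exact sum_congr rfl fun j _ => by ring
    simpa [hi] using hfactor
  have hzero := eq_zero_of_sum_mul_div_sub_eq_zero hdist (fun j => by exact_mod_cast hm j)
    hmin hsum
  obtain ⟨j, hj⟩ := Fintype.exists_ne_of_one_lt_card (by simpa using hl.trans_lt' one_lt_two) i
  exact ⟨le_antisymm (by simpa using card_le_two_of_forall_ne_eq hdist hzero) hl, j, hzero j hj⟩
end

section
/- Let ν₁,...,ν_l be distinct real numbers with positive integer multiplicities m₁,...,m_l and let ϱ > 0. Suppose for each i, ∑_{j≠i} m_j (ν_iν_j − 1/ϱ²)/(ν_i − ν_j) = 0. If l ≥ 2 and some ν_i > 0, and ν₁ > 0 is chosen so that for every j ≠ 1 the number ϱν_j does not lie strictly between 1/(ϱν₁) and ϱν₁, then ϱ²ν₁ν_j = 1 for all j ≠ 1, and hence l = 2. -/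
/-!
At a positive curvature ν₁ whose partners ϱνⱼ all avoid the open interval between ϱν₁ and its
reciprocal, every term of the Cartan sum at ν₁ is nonpositive; since the sum vanishes, each term
vanishes, i.e. ϱ²ν₁νⱼ = 1. All νⱼ with j ≠ 1 then coincide, so by distinctness there is only one.
-/

open Finset

lemma div_nonpos_of_mul_nonpos {a b : ℝ} (h : a * b ≤ 0) : a / b ≤ 0 := by
  have hab : a / b = a * b / b ^ 2 := by
    rcases eq_or_ne b 0 with rfl | hb
    · simp
    · field_simp
  rw [hab]
  exact div_nonpos_of_nonpos_of_nonneg h (sq_nonneg b)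

lemma mul_sub_one_mul_sub_nonpos_of_notMem_Ioo {a b : ℝ} (ha : 0 < a)
    (hb : b ∉ Set.Ioo (min (1 / a) a) (max (1 / a) a)) : (a * b - 1) * (a - b) ≤ 0 := by
  rw [Set.mem_Ioo, not_and_or, not_lt, not_lt] at hb
  rcases hb with hb | hb
  · have hab : a * b ≤ 1 := by
      have := (le_div_iff₀ ha).mp (hb.trans (min_le_left _ _))
      linarith
    exact mul_nonpos_of_nonpos_of_nonneg (by linarith) (by linarith [min_le_right (1 / a) a])
  · have hab : 1 ≤ a * b := by
      have := (div_le_iff₀ ha).mp ((le_max_left _ _).trans hb)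
      linarith
    exact mul_nonpos_of_nonneg_of_nonpos (by linarith) (by linarith [le_max_right (1 / a) a])

lemma cartan_term_nonpos {ρ x y : ℝ} (k : ℕ) (hρ : 0 < ρ) (hx : 0 < x)
    (hy : ρ * y ∉ Set.Ioo (min (1 / (ρ * x)) (ρ * x)) (max (1 / (ρ * x)) (ρ * x))) :
    (k : ℝ) * (x * y - 1 / ρ ^ 2) / (x - y) ≤ 0 := by
  have hρx := mul_sub_one_mul_sub_nonpos_of_notMem_Ioo (mul_pos hρ hx) hy
  have hscale : (ρ * x * (ρ * y) - 1) * (ρ * x - ρ * y)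
      = ρ ^ 3 * ((x * y - 1 / ρ ^ 2) * (x - y)) := by
    field_simp
  rw [hscale] at hρx
  rw [mul_div_assoc]
  exact mul_nonpos_of_nonneg_of_nonpos k.cast_nonneg <| div_nonpos_of_mul_nonpos <|
    nonpos_of_mul_nonpos_right hρx (by positivity)

lemma sq_mul_mul_eq_one_of_cartan_term_eq_zero {ρ x y : ℝ} {k : ℕ} (hk : 0 < k) (hρ : 0 < ρ)
    (hxy : x ≠ y) (h : (k : ℝ) * (x * y - 1 / ρ ^ 2) / (x - y) = 0) : ρ ^ 2 * x * y = 1 := by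
  have hk' : (k : ℝ) ≠ 0 := by exact_mod_cast hk.ne'
  rw [div_eq_zero_iff, mul_eq_zero, or_iff_left (sub_ne_zero.mpr hxy),
    or_iff_right hk', sub_eq_zero] at h
  field_simp at h
  linarith

theorem stmt1_general (l : ℕ) (hl : 2 ≤ l) (nu : Fin l → ℝ) (m : Fin l → ℕ)
    (hdist : Function.Injective nu) (hm : ∀ i, 0 < m i)
    (rho : ℝ) (hrho : 0 < rho)
    (hcartan : ∀ i : Fin l, ∑ j ∈ Finset.univ.erase i,
      (m j : ℝ) * (nu i * nu j - 1 / rho ^ 2) / (nu i - nu j) = 0)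
    (i1 : Fin l) (h1pos : 0 < nu i1)
    (hbetween : ∀ j : Fin l, j ≠ i1 →
      rho * nu j ∉ Set.Ioo (min (1 / (rho * nu i1)) (rho * nu i1))
                           (max (1 / (rho * nu i1)) (rho * nu i1))) :
    (∀ j : Fin l, j ≠ i1 → rho ^ 2 * nu i1 * nu j = 1) ∧ l = 2 := by
  have hterms_zero := (sum_eq_zero_iff_of_nonpos fun j hj =>
    cartan_term_nonpos (m j) hrho h1pos (hbetween j (ne_of_mem_erase hj))).mp (hcartan i1)
  have hreciprocal : ∀ j, j ≠ i1 → rho ^ 2 * nu i1 * nu j = 1 := fun j hj =>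
    sq_mul_mul_eq_one_of_cartan_term_eq_zero (hm j) hrho (hdist.ne hj.symm)
      (hterms_zero j (mem_erase.mpr ⟨hj, mem_univ j⟩))
  refine ⟨hreciprocal, ?_⟩
  have hcard : (univ.erase i1).card ≤ 1 := card_le_one.mpr fun a ha b hb =>
    hdist <| mul_left_cancel₀ (by positivity : rho ^ 2 * nu i1 ≠ 0) <|
      (hreciprocal a (ne_of_mem_erase ha)).trans (hreciprocal b (ne_of_mem_erase hb)).symm
  rw [card_erase_of_mem (mem_univ i1), card_univ, Fintype.card_fin] at hcard
  omega

/-- The Cartan identities for the slice principal curvatures in the hyperbolic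
case force exactly two distinct principal curvatures with ϱ²ν₁ν₂ = 1. -/
theorem stmt1 (l : ℕ) (hl : 2 ≤ l) (nu : Fin l → ℝ) (m : Fin l → ℕ)
    (hdist : Function.Injective nu) (hm : ∀ i, 0 < m i)
    (rho : ℝ) (hrho : 0 < rho)
    (hcartan : ∀ i : Fin l, ∑ j ∈ Finset.univ.erase i,
      (m j : ℝ) * (nu i * nu j - 1 / rho ^ 2) / (nu i - nu j) = 0)
    (hpos : ∃ i, 0 < nu i)
    (i1 : Fin l) (h1pos : 0 < nu i1)
    (hbetween : ∀ j : Fin l, j ≠ i1 →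
      rho * nu j ∉ Set.Ioo (min (1 / (rho * nu i1)) (rho * nu i1))
                           (max (1 / (rho * nu i1)) (rho * nu i1))) :
    (∀ j : Fin l, j ≠ i1 → rho ^ 2 * nu i1 * nu j = 1) ∧ l = 2 :=
  stmt1_general l hl nu m hdist hm rho hrho hcartan i1 h1pos hbetween
end

section
/- Let λ₁ > 0 be the smallest positive element among distinct reals λ₁,...,λ_l (l ≥ 2) with positive integer multiplicities m_j, and suppose ∑_{j≠1} m_j λ₁λ_j/(λ₁ − λ_j) = 0. Then every term m_j λ₁λ_j/(λ₁ − λ_j) in the sum is ≤ 0, hence each term vanishes, hence every λ_j with j ≠ 1 satisfies λ_j λ₁ (λ₁ − λ_j)⁻¹ = 0, i.e. λ_j = 0 for all j ≠ 1, so l = 2. -/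
/-! If `λ₁` is the smallest positive value, then for any other `λ` either `λ ≤ 0`, so that
`λ₁λ ≤ 0 < λ₁ - λ`, or `λ > λ₁`, so that `λ₁λ > 0 > λ₁ - λ`. Either way every term
`m λ₁λ / (λ₁ - λ)` of the vanishing sum is nonpositive, hence zero, which forces `λ = 0`;
injectivity then leaves room for only one index besides `λ₁`. -/

open Finset

section LinearOrderedField

variable {K : Type*} [Field K] [LinearOrder K] [IsStrictOrderedRing K]

theorem mul_div_sub_nonpos_of_min_pos {a b : K} (ha : 0 < a) (hba : b ≠ a)
    (hmin : 0 < b → a ≤ b) : a * b / (a - b) ≤ 0 := by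
  rcases le_or_gt b 0 with hb | hb
  · exact div_nonpos_of_nonpos_of_nonneg (mul_nonpos_of_nonneg_of_nonpos ha.le hb)
      (by linarith)
  · have hab : a < b := lt_of_le_of_ne (hmin hb) hba.symm
    exact (div_neg_of_pos_of_neg (mul_pos ha hb) (by linarith)).le

theorem eq_zero_of_mul_mul_div_sub_eq_zero {c a b : K} (hc : c ≠ 0) (ha : a ≠ 0) (hba : b ≠ a)
    (h : c * (a * b) / (a - b) = 0) : b = 0 := by
  simpa [hc, ha, sub_ne_zero.mpr hba.symm] using h

end LinearOrderedField

theorem Fintype.card_le_two_of_injective_of_eq_off {α β : Type*} [Fintype α] {f : α → β}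
    (hf : Function.Injective f) (i : α) (c : β) (h : ∀ j, j ≠ i → f j = c) :
    Fintype.card α ≤ 2 := by
  classical
  have hsub : (univ.erase i).card ≤ 1 := card_le_one.2 fun a ha b hb =>
    hf ((h a (ne_of_mem_erase ha)).trans (h b (ne_of_mem_erase hb)).symm)
  rw [card_erase_of_mem (mem_univ i), card_univ] at hsub
  omega

/-- Flat case of the Cartan identity argument: if λ₁ is the smallest positive
curvature, every term in the Cartan sum is nonpositive, hence vanishes,
so all other curvatures are zero and there are exactly two of them. -/
theorem stmt2 (l : ℕ) (hl : 2 ≤ l) (lam : Fin l → ℝ) (m : Fin l → ℕ)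
    (hdist : Function.Injective lam) (hm : ∀ i, 0 < m i)
    (i1 : Fin l) (h1pos : 0 < lam i1)
    (hmin : ∀ j : Fin l, 0 < lam j → lam i1 ≤ lam j)
    (hcartan : ∑ j ∈ Finset.univ.erase i1,
      (m j : ℝ) * (lam i1 * lam j) / (lam i1 - lam j) = 0) :
    (∀ j ∈ Finset.univ.erase i1,
        (m j : ℝ) * (lam i1 * lam j) / (lam i1 - lam j) ≤ 0) ∧
    (∀ j ∈ Finset.univ.erase i1,
        (m j : ℝ) * (lam i1 * lam j) / (lam i1 - lam j) = 0) ∧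
    (∀ j : Fin l, j ≠ i1 → lam j = 0) ∧ l = 2 := by
  have hne : ∀ j, j ≠ i1 → lam j ≠ lam i1 := fun j hj h => hj (hdist h)
  have hterm : ∀ j ∈ univ.erase i1, (m j : ℝ) * (lam i1 * lam j) / (lam i1 - lam j) ≤ 0 :=
    fun j hj => by
      rw [mul_div_assoc]
      exact mul_nonpos_of_nonneg_of_nonpos (Nat.cast_nonneg _)
        (mul_div_sub_nonpos_of_min_pos h1pos (hne j (ne_of_mem_erase hj)) (hmin j))
  have hvanish := (sum_eq_zero_iff_of_nonpos hterm).mp hcartan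
  have hzero : ∀ j, j ≠ i1 → lam j = 0 := fun j hj =>
    eq_zero_of_mul_mul_div_sub_eq_zero (Nat.cast_ne_zero.mpr (hm j).ne') h1pos.ne' (hne j hj)
      (hvanish j (mem_erase.mpr ⟨hj, mem_univ j⟩))
  refine ⟨hterm, hvanish, hzero, le_antisymm ?_ hl⟩
  simpa using Fintype.card_le_two_of_injective_of_eq_off hdist i1 0 hzero
end

section
/- Let F be a Riemannian manifold, ϱ : I → (0,∞) smooth, and consider the Lorentzian warped product M̄ = −I ×_ϱ F with metric ḡ = −dt² + ϱ(t)² g_F. Let f : F → I be smooth. Then the graph M = {(f(p), p) : p ∈ F} is a null hypersurface of M̄ (i.e., the induced metric on M is degenerate at every point) if and only if |grad f|_{g_F} = ϱ ∘ f at every point of F. -/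
open scoped RealInnerProductSpace

lemma fderiv_eq_inner_gradient {F : Type*} [NormedAddCommGroup F] [InnerProductSpace ℝ F]
    [CompleteSpace F] (f : F → ℝ) (p Y : F) :
    fderiv ℝ f p Y = ⟪gradient f p, Y⟫ := by
  rw [gradient, InnerProductSpace.toDual_symm_apply]

/-- The graph of a smooth function f : F → I is a null hypersurface of the
Lorentzian warped product −I ×_ϱ F (the induced metric, whose value on tangent
vectors (df(X),X), (df(Y),Y) of the graph is −df(X)df(Y) + ϱ(f p)² ⟨X,Y⟩, is
degenerate at every point) if and only if |grad f| = ϱ ∘ f everywhere. -/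
theorem stmt9 {F : Type*} [NormedAddCommGroup F] [InnerProductSpace ℝ F]
    [FiniteDimensional ℝ F] [Nontrivial F]
    (rho : ℝ → ℝ) (hrho : ∀ t, 0 < rho t) (hrhosmooth : ContDiff ℝ (⊤ : ℕ∞) rho)
    (f : F → ℝ) (hf : ContDiff ℝ (⊤ : ℕ∞) f) :
    (∀ p : F, ∃ X : F, X ≠ 0 ∧ ∀ Y : F,
        -(fderiv ℝ f p X * fderiv ℝ f p Y) + (rho (f p)) ^ 2 * ⟪X, Y⟫ = 0) ↔
    (∀ p : F, ‖gradient f p‖ = rho (f p)) := by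
  constructor
  · intro h p
    obtain ⟨X, hX, hXY⟩ := h p
    set g := gradient f p
    -- rewrite the condition as ρ² X = ⟪g,X⟫ g
    have key : (rho (f p)) ^ 2 • X - ⟪g, X⟫ • g = 0 := by
      rw [← @inner_self_eq_zero ℝ]
      have h1 := hXY (((rho (f p)) ^ 2) • X - ⟪g, X⟫ • g)
      rw [fderiv_eq_inner_gradient] at h1
      simp only [fderiv_eq_inner_gradient] at h1
      simp only [inner_sub_right, inner_smul_right, real_inner_smul_left,
        inner_sub_left, inner_smul_left, RCLike.star_def, conj_trivial] at h1 ⊢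
      ring_nf at h1 ⊢
      linarith
    have key' : (rho (f p)) ^ 2 • X = ⟪g, X⟫ • g := by
      rwa [sub_eq_zero] at key
    have hgX : ⟪g, X⟫ ≠ 0 := by
      intro h0
      rw [h0, zero_smul, smul_eq_zero] at key'
      rcases key' with h1 | h1
      · exact (pow_ne_zero 2 (hrho (f p)).ne') h1
      · exact hX h1
    -- take inner product with g
    have h2 : (rho (f p)) ^ 2 * ⟪g, X⟫ = ⟪g, X⟫ * ‖g‖ ^ 2 := by
      have := congrArg (fun v => ⟪g, v⟫) key'
      simpa [inner_smul_right, real_inner_self_eq_norm_sq, mul_comm] using this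
    have h3 : ‖g‖ ^ 2 = (rho (f p)) ^ 2 := by
      rw [mul_comm] at h2
      exact (mul_left_cancel₀ hgX h2).symm
    have := congrArg Real.sqrt h3
    rwa [Real.sqrt_sq (norm_nonneg g), Real.sqrt_sq (hrho (f p)).le] at this
  · intro h p
    refine ⟨gradient f p, ?_, ?_⟩
    · intro h0
      have := h p
      rw [h0, norm_zero] at this
      exact (hrho (f p)).ne this
    · intro Y
      rw [fderiv_eq_inner_gradient, fderiv_eq_inner_gradient,
        real_inner_self_eq_norm_sq, h p]
      ring
end

section
/- Let ν₁,...,ν_l be the distinct constant principal curvatures, with multiplicities m_i, of an isoparametric hypersurface in a Riemannian space form of curvature κ = c/ϱ², and set ν_i = (1/√2)(2λ_i + ψ) with ψ = √2 ϱ'/ϱ. If the classical Cartan identities ∑_{j≠i} m_j (κ + ν_iν_j)/(ν_i − ν_j) = 0 hold for each i, and (c + (ϱ')²)/ϱ² = c̄, then ∑_{j≠i} m_j (c̄ + 2λ_iλ_j + ψ(λ_i + λ_j))/(λ_i − λ_j) = 0 for each i. -/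
/-!
Since ν = (2λ + ψ)/√2 is affine in λ with slope √2, every difference νᵢ - νⱼ is √2 (λᵢ - λⱼ),
and κ + νᵢνⱼ = κ + ψ²/2 + 2λᵢλⱼ + ψ(λᵢ + λⱼ), where κ + ψ²/2 = c̄. Hence each term of the
screen Cartan sum is √2 times the corresponding term of the classical one.
-/

open Finset

noncomputable def sliceCurvature (ψ lam : ℝ) : ℝ := 1 / √2 * (2 * lam + ψ)

theorem div_eq_mul_div_of_eq_mul {α x d d' : ℝ} (hα : α ≠ 0) (h : d' = α * d) :
    x / d = α * (x / d') := by
  rw [h, div_mul_eq_div_div_swap, mul_div_cancel₀ _ hα]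

theorem sliceCurvature_sub (ψ a b : ℝ) :
    sliceCurvature ψ a - sliceCurvature ψ b = √2 * (a - b) := by
  unfold sliceCurvature
  field_simp
  rw [Real.sq_sqrt zero_le_two]
  ring

theorem sliceCurvature_mul (ψ a b : ℝ) :
    sliceCurvature ψ a * sliceCurvature ψ b = ψ ^ 2 / 2 + 2 * a * b + ψ * (a + b) := by
  unfold sliceCurvature
  field_simp
  rw [Real.sq_sqrt zero_le_two]
  ring

theorem screen_cartan_term_eq (w κ ψ a b : ℝ) :
    w * (κ + ψ ^ 2 / 2 + 2 * a * b + ψ * (a + b)) / (a - b) =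
      √2 * (w * (κ + sliceCurvature ψ a * sliceCurvature ψ b) /
        (sliceCurvature ψ a - sliceCurvature ψ b)) := by
  rw [sliceCurvature_mul, ← div_eq_mul_div_of_eq_mul (by positivity) (sliceCurvature_sub ψ a b)]
  ring

theorem stmt16_general (l : ℕ) (lam nu : Fin l → ℝ) (m : Fin l → ℕ)
    (r r' c cbar psi : ℝ)
    (hpsi : psi = Real.sqrt 2 * (r' / r))
    (hnu : ∀ i, nu i = (1 / Real.sqrt 2) * (2 * lam i + psi))
    (hcurv : (c + r' ^ 2) / r ^ 2 = cbar)
    (hcartan : ∀ i : Fin l, ∑ j ∈ Finset.univ.erase i,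
      (m j : ℝ) * (c / r ^ 2 + nu i * nu j) / (nu i - nu j) = 0) :
    ∀ i : Fin l, ∑ j ∈ Finset.univ.erase i,
      (m j : ℝ) * (cbar + 2 * lam i * lam j + psi * (lam i + lam j)) /
        (lam i - lam j) = 0 := by
  intro i
  have hcbar : cbar = c / r ^ 2 + psi ^ 2 / 2 := by
    rw [← hcurv, hpsi, mul_pow, Real.sq_sqrt zero_le_two, div_pow]
    ring
  calc ∑ j ∈ univ.erase i,
        (m j : ℝ) * (cbar + 2 * lam i * lam j + psi * (lam i + lam j)) / (lam i - lam j)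
      = ∑ j ∈ univ.erase i, √2 * ((m j : ℝ) * (c / r ^ 2 + nu i * nu j) / (nu i - nu j)) := by
        refine sum_congr rfl fun j _ => ?_
        rw [hcbar, hnu, hnu]
        exact screen_cartan_term_eq _ _ _ _ _
    _ = 0 := by rw [← mul_sum, hcartan i, mul_zero]

/-- Algebraic content of Theorem 4.3: the classical Cartan identities for the
slice principal curvatures ν_i = (1/√2)(2λ_i + ψ) in a space form of
curvature κ = c/ϱ², together with (c + (ϱ')²)/ϱ² = c̄ and ψ = √2 ϱ'/ϱ, yield
the Cartan identities for the screen principal curvatures λ_i. -/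
theorem stmt16 (l : ℕ) (lam nu : Fin l → ℝ) (m : Fin l → ℕ)
    (hdist : Function.Injective lam) (hm : ∀ i, 0 < m i)
    (r r' c cbar psi : ℝ) (hr : 0 < r)
    (hpsi : psi = Real.sqrt 2 * (r' / r))
    (hnu : ∀ i, nu i = (1 / Real.sqrt 2) * (2 * lam i + psi))
    (hcurv : (c + r' ^ 2) / r ^ 2 = cbar)
    (hcartan : ∀ i : Fin l, ∑ j ∈ Finset.univ.erase i,
      (m j : ℝ) * (c / r ^ 2 + nu i * nu j) / (nu i - nu j) = 0) :
    ∀ i : Fin l, ∑ j ∈ Finset.univ.erase i,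
      (m j : ℝ) * (cbar + 2 * lam i * lam j + psi * (lam i + lam j)) /
        (lam i - lam j) = 0 :=
  stmt16_general l lam nu m r r' c cbar psi hpsi hnu hcurv hcartan
end
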